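/- Let f(r) = r(1+r^2)^{-1/4} and h(r) = (1+r^2)^{-α} with α > 0, and let p ≥ 2 be an integer. For all r > 0, the quantity -h''(r)/h(r) - (p-1) f'(r)h'(r)/(f(r)h(r)) is strictly greater than (α r^2/(1+r^2)^2) * [p - (3 + 4α)]. -/

import Mathlib

noncomputable def f (r : ℝ) : ℝ := r * (1 + r ^ 2) ^ (-(1 / 4 : ℝ))

noncomputable def h (α : ℝ) (r : ℝ) : ℝ := (1 + r ^ 2) ^ (-α)

/-!
Writing `u = 1 + r²`, both warping functions have rational logarithmic derivatives:
`h'/h = -2αr/u`, `h''/h = 2α((2α+1)r² - 1)/u²` and `f'/f = (2 + r²)/(2ru)`.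
Substituting gives the exact identity
`-h''/h - (p-1) f'h'/(fh) = α r² (p - 3 - 4α)/u² + 2αp/u²`,
and the last term is positive.
-/

lemma hasDerivAt_one_add_sq_rpow (a r : ℝ) :
    HasDerivAt (fun x : ℝ => (1 + x ^ 2) ^ a) (2 * a * r / (1 + r ^ 2) * (1 + r ^ 2) ^ a) r := by
  have hu : 1 + r ^ 2 ≠ 0 := by positivity
  convert ((hasDerivAt_pow 2 r).const_add 1).rpow_const (p := a) (Or.inl hu) using 1
  rw [Real.rpow_sub_one hu]
  field_simp
  ring

lemma h_pos (α r : ℝ) : 0 < h α r := by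
  unfold h
  positivity

lemma hasDerivAt_h (α r : ℝ) : HasDerivAt (h α) (-(2 * α * r / (1 + r ^ 2)) * h α r) r := by
  refine (hasDerivAt_one_add_sq_rpow (-α) r).congr_deriv ?_
  unfold h
  ring

lemma deriv_h (α : ℝ) : deriv (h α) = fun r => -(2 * α * r / (1 + r ^ 2)) * h α r :=
  funext fun r => (hasDerivAt_h α r).deriv

lemma deriv_deriv_h (α r : ℝ) :
    deriv (deriv (h α)) r = 2 * α * ((2 * α + 1) * r ^ 2 - 1) / (1 + r ^ 2) ^ 2 * h α r := by
  have hu : 1 + r ^ 2 ≠ 0 := by positivity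
  have hnum : HasDerivAt (fun x : ℝ => 2 * α * x) (2 * α) r := by
    simpa using (hasDerivAt_id r).const_mul (2 * α)
  have hden : HasDerivAt (fun x : ℝ => 1 + x ^ 2) (2 * r) r := by
    simpa using (hasDerivAt_pow 2 r).const_add 1
  have hq : HasDerivAt (fun x => -(2 * α * x / (1 + x ^ 2)) * h α x) _ r :=
    ((hnum.div hden hu).neg).mul (hasDerivAt_h α r)
  rw [deriv_h, hq.deriv, Pi.neg_apply, Pi.div_apply]
  field_simp
  ring

lemma deriv_f {r : ℝ} (hr : r ≠ 0) : deriv f r = (2 + r ^ 2) / (2 * r * (1 + r ^ 2)) * f r := by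
  have hu : 1 + r ^ 2 ≠ 0 := by positivity
  have hf : HasDerivAt f _ r := (hasDerivAt_id' r).mul (hasDerivAt_one_add_sq_rpow (-(1 / 4)) r)
  rw [hf.deriv]
  unfold f
  field_simp
  ring

lemma f_ne_zero {r : ℝ} (hr : r ≠ 0) : f r ≠ 0 := by
  unfold f
  positivity

lemma ricci_circle_eq (α p : ℝ) {r : ℝ} (hr : r ≠ 0) :
    -(deriv (deriv (h α)) r) / h α r - (p - 1) * (deriv f r * deriv (h α) r) / (f r * h α r)
      = α * r ^ 2 / (1 + r ^ 2) ^ 2 * (p - (3 + 4 * α)) + 2 * α * p / (1 + r ^ 2) ^ 2 := by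
  have hh := (h_pos α r).ne'
  have hf := f_ne_zero hr
  rw [deriv_deriv_h, deriv_h, deriv_f hr]
  field_simp
  ring

theorem stmt_4 (α : ℝ) (hα : 0 < α) (p : ℕ) (hp : 2 ≤ p) :
    ∀ r : ℝ, 0 < r →
      (α * r ^ 2 / (1 + r ^ 2) ^ 2) * ((p : ℝ) - (3 + 4 * α)) <
        -(deriv (deriv (h α)) r) / h α r
          - ((p : ℝ) - 1) * (deriv f r * deriv (h α) r) / (f r * h α r) := by
  intro r hr
  rw [ricci_circle_eq α p hr.ne']
  have hp_pos : (0 : ℝ) < p := by exact_mod_cast (by omega : 0 < p)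
  have : 0 < 2 * α * p / (1 + r ^ 2) ^ 2 := by positivity
  linarith
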